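/- arXiv:2312.01428 — 4 statements merged into one kernel-verified Lean document; each statement's English description precedes it below -/
import Mathlib

section
/- Let K ⊆ ℝ^m be a pointed closed convex cone (i.e., K ∩ (−K) = {0}) and let D ⊆ ℝ^m be a nonempty set. Then cl cone(D + K) ∩ (−K) = {0} if and only if cl cone(D) ∩ (−K) = {0}. -/
open Set Pointwise

/-!
Write `C := cl cone D`, a closed cone. If `C ∩ -K = {0}`, the unit sphere of `C` is compact and
disjoint from the closed set `-K`, so it keeps a positive distance `r` from it; by homogeneity
`r ‖c‖ ≤ ‖c + k‖` for all `c ∈ C`, `k ∈ K`. Hence near any point of `cl (C + K)` only a bounded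
part of `C` matters, and `C + K` is closed (compact plus closed). As `cone (D + K) ⊆ C + K`, it
remains to see `(C + K) ∩ -K = {0}`: if `c + k ∈ -K` then `c ∈ -K` because `K + K ⊆ K`, so
`c = 0` and `k ∈ K ∩ -K = {0}`. The other direction is monotonicity, since `D ⊆ D + K`.
-/

/-- The smallest cone containing `D`: `cone D = {t • d : t ≥ 0, d ∈ D}`. -/
def coneGen {E : Type*} [AddCommGroup E] [Module ℝ E] (D : Set E) : Set E :=
  {x | ∃ t : ℝ, 0 ≤ t ∧ ∃ d ∈ D, x = t • d}

section Cones

variable {E : Type*} [AddCommGroup E] [Module ℝ E]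

lemma coneGen_mono {D D' : Set E} (h : D ⊆ D') : coneGen D ⊆ coneGen D' := by
  rintro x ⟨t, ht, d, hd, rfl⟩
  exact ⟨t, ht, d, h hd, rfl⟩

lemma smul_mem_coneGen {D : Set E} {t : ℝ} (ht : 0 ≤ t) {x : E} (hx : x ∈ coneGen D) :
    t • x ∈ coneGen D := by
  obtain ⟨s, hs, d, hd, rfl⟩ := hx
  exact ⟨t * s, mul_nonneg ht hs, d, hd, (mul_smul t s d).symm⟩

lemma coneGen_nonempty_iff {D : Set E} : (coneGen D).Nonempty ↔ D.Nonempty := by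
  constructor
  · rintro ⟨_, _, _, d, hd, _⟩
    exact ⟨d, hd⟩
  · rintro ⟨d, hd⟩
    exact ⟨d, 1, zero_le_one, d, hd, (one_smul ℝ d).symm⟩

lemma coneGen_add_subset {D K : Set E} (hK : ∀ t : ℝ, 0 ≤ t → ∀ v ∈ K, t • v ∈ K) :
    coneGen (D + K) ⊆ coneGen D + K := by
  rintro _ ⟨t, ht, _, ⟨d, hd, k, hk, rfl⟩, rfl⟩
  exact ⟨t • d, ⟨t, ht, d, hd, rfl⟩, t • k, hK t ht k hk, (smul_add t d k).symm⟩

lemma add_mem_of_convex_of_smul_mem {K : Set E} (hKcone : ∀ t : ℝ, 0 ≤ t → ∀ v ∈ K, t • v ∈ K)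
    (hKconvex : Convex ℝ K) {u w : E} (hu : u ∈ K) (hw : w ∈ K) : u + w ∈ K := by
  have hmid : (1 / 2 : ℝ) • u + (1 / 2 : ℝ) • w ∈ K :=
    hKconvex hu hw (by norm_num) (by norm_num) (by norm_num)
  convert hKcone 2 zero_le_two _ hmid using 1
  rw [smul_add, smul_smul, smul_smul]
  norm_num

end Cones

lemma add_inter_neg_subset_zero {E : Type*} [AddCommGroup E] {C K : Set E}
    (hKadd : ∀ u ∈ K, ∀ w ∈ K, u + w ∈ K)
    (hKpointed : K ∩ -K ⊆ {0}) (hCK : C ∩ -K ⊆ {0}) : (C + K) ∩ -K ⊆ {0} := by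
  rintro _ ⟨⟨c, hc, k, hk, rfl⟩, hck⟩
  have hc0 : c = 0 := hCK ⟨hc, by simpa [neg_add_rev] using hKadd _ hk _ hck⟩
  subst hc0
  simp only [zero_add] at hck ⊢
  exact hKpointed ⟨hk, hck⟩

section Closed

variable {E : Type*} [NormedAddCommGroup E] [NormedSpace ℝ E]

lemma smul_mem_closure_coneGen {D : Set E} {t : ℝ} (ht : 0 ≤ t) {x : E}
    (hx : x ∈ closure (coneGen D)) : t • x ∈ closure (coneGen D) := by
  refine closure_mono ?_ (smul_closure_subset t _ (smul_mem_smul_set hx))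
  rintro _ ⟨y, hy, rfl⟩
  exact smul_mem_coneGen ht hy

lemma zero_mem_closure_coneGen_iff {D : Set E} : (0 : E) ∈ closure (coneGen D) ↔ D.Nonempty := by
  refine ⟨fun h => coneGen_nonempty_iff.mp (closure_nonempty_iff.mp ⟨0, h⟩), fun ⟨d, hd⟩ => ?_⟩
  exact subset_closure ⟨0, le_rfl, d, hd, (zero_smul ℝ d).symm⟩

variable [ProperSpace E] {C K : Set E}

lemma exists_pos_mul_norm_le_norm_add
    (hCcone : ∀ t : ℝ, 0 ≤ t → ∀ v ∈ C, t • v ∈ C) (hCclosed : IsClosed C)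
    (hKcone : ∀ t : ℝ, 0 ≤ t → ∀ v ∈ K, t • v ∈ K) (hKclosed : IsClosed K)
    (hCK : C ∩ -K ⊆ {0}) :
    ∃ r > 0, ∀ c ∈ C, ∀ k ∈ K, r * ‖c‖ ≤ ‖c + k‖ := by
  have hdisj : Disjoint (C ∩ Metric.sphere 0 1) (-K) := by
    rw [Set.disjoint_left]
    rintro c ⟨hc, hc1⟩ hcK
    have : c = 0 := hCK ⟨hc, hcK⟩
    simp [this] at hc1
  obtain ⟨r, hr, hsep⟩ := Metric.exists_pos_forall_lt_edist
    ((isCompact_sphere 0 1).inter_left hCclosed) hKclosed.neg hdisj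
  refine ⟨r, hr, fun c hc k hk => ?_⟩
  rcases eq_or_ne c 0 with rfl | hc0
  · simp
  have hnorm : 0 < ‖c‖ := norm_pos_iff.mpr hc0
  have hsep := hsep (‖c‖⁻¹ • c) ⟨hCcone _ (inv_nonneg.mpr hnorm.le) c hc, by
      simp [norm_smul, hnorm.ne']⟩ (-(‖c‖⁻¹ • k))
    (by simpa using hKcone _ (inv_nonneg.mpr hnorm.le) k hk)
  rw [edist_nndist, ENNReal.coe_lt_coe, ← NNReal.coe_lt_coe, coe_nndist, dist_eq_norm,
    sub_neg_eq_add, ← smul_add, norm_smul, norm_inv, norm_norm, lt_inv_mul_iff₀ hnorm,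
    mul_comm] at hsep
  exact hsep.le

lemma isClosed_add_of_inter_neg_subset_zero
    (hCcone : ∀ t : ℝ, 0 ≤ t → ∀ v ∈ C, t • v ∈ C) (hCclosed : IsClosed C)
    (hKcone : ∀ t : ℝ, 0 ≤ t → ∀ v ∈ K, t • v ∈ K) (hKclosed : IsClosed K)
    (hCK : C ∩ -K ⊆ {0}) : IsClosed (C + K) := by
  obtain ⟨r, hr, hbound⟩ :=
    exists_pos_mul_norm_le_norm_add hCcone hCclosed hKcone hKclosed hCK
  refine isClosed_of_closure_subset fun x hx => ?_
  have hbounded : IsClosed ((C ∩ Metric.closedBall 0 ((‖x‖ + 1) / r)) + K) :=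
    hKclosed.add_left_of_isCompact ((isCompact_closedBall _ _).inter_left hCclosed)
  refine add_subset_add_right inter_subset_left (hbounded.closure_subset ?_)
  rw [Metric.mem_closure_iff] at hx ⊢
  intro ε hε
  obtain ⟨_, ⟨c, hc, k, hk, rfl⟩, hdist⟩ := hx (min ε 1) (lt_min hε one_pos)
  refine ⟨c + k, ⟨c, ⟨hc, ?_⟩, k, hk, rfl⟩, hdist.trans_le (min_le_left _ _)⟩
  rw [mem_closedBall_zero_iff, le_div_iff₀ hr, mul_comm]
  rw [dist_eq_norm, norm_sub_rev] at hdist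
  linarith [hbound c hc k hk, norm_le_insert' (c + k) x, min_le_right ε 1]

end Closed

theorem stmt_0_general {m : ℕ} (K D : Set (Fin m → ℝ))
    (hKcone : ∀ t : ℝ, 0 ≤ t → ∀ v ∈ K, t • v ∈ K)
    (hKclosed : IsClosed K)
    (hKconvex : Convex ℝ K)
    (hKpointed : K ∩ (-K) = {0}) :
    closure (coneGen (D + K)) ∩ (-K) = {0} ↔
      closure (coneGen D) ∩ (-K) = {0} := by
  have h0K : (0 : Fin m → ℝ) ∈ K := (hKpointed.symm.subset rfl).1
  have h0negK : (0 : Fin m → ℝ) ∈ -K := (hKpointed.symm.subset rfl).2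
  rw [eq_singleton_iff_unique_mem, eq_singleton_iff_unique_mem]
  refine and_congr ?_ ⟨fun h => ?_, fun h => ?_⟩
  · simp only [mem_inter_iff, zero_mem_closure_coneGen_iff, add_nonempty, h0negK, and_true]
    exact and_iff_left ⟨0, h0K⟩
  · exact (inter_subset_inter_left _ (closure_mono (coneGen_mono (subset_add_left D h0K)))).trans h
  · have hKadd : ∀ u ∈ K, ∀ w ∈ K, u + w ∈ K :=
      fun u hu w hw => add_mem_of_convex_of_smul_mem hKcone hKconvex hu hw
    have hclosed : IsClosed (closure (coneGen D) + K) :=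
      isClosed_add_of_inter_neg_subset_zero (fun t ht _ hv => smul_mem_closure_coneGen ht hv)
        isClosed_closure hKcone hKclosed h
    calc closure (coneGen (D + K)) ∩ -K ⊆ (closure (coneGen D) + K) ∩ -K :=
          inter_subset_inter_left _ <| closure_minimal
            ((coneGen_add_subset hKcone).trans (add_subset_add_right subset_closure)) hclosed
      _ ⊆ {0} := add_inter_neg_subset_zero hKadd hKpointed.subset h

/-- Let `K ⊆ ℝ^m` be a pointed closed convex cone and `D ⊆ ℝ^m` a nonempty set. Then
`cl cone (D + K) ∩ (-K) = {0}` iff `cl cone D ∩ (-K) = {0}`. -/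
theorem stmt_0 {m : ℕ} (K D : Set (Fin m → ℝ))
    (hKne : K.Nonempty)
    (hKcone : ∀ t : ℝ, 0 ≤ t → ∀ v ∈ K, t • v ∈ K)
    (hKclosed : IsClosed K)
    (hKconvex : Convex ℝ K)
    (hKpointed : K ∩ (-K) = {0})
    (hD : D.Nonempty) :
    closure (coneGen (D + K)) ∩ (-K) = {0} ↔
      closure (coneGen D) ∩ (-K) = {0} :=
  stmt_0_general K D hKcone hKclosed hKconvex hKpointed
end

section
/- Let X ⊆ ℝ^n be nonempty, f : ℝ^n → ℝ^m, K ⊆ ℝ^m a closed convex cone, and ε ∈ ℝ^m_+. A point x̄ ∈ X is an ε-efficient solution if and only if cone[f(X) − (f(x̄) − ε)] ∩ (−K) = {0}. -/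
open Set Pointwise

/-! Since positive rescaling preserves the cone `-K`, the cone generated by
`D = f(X) - (f(xbar) - ε)` meets `-K` only in `0` exactly when `D` does, and a nonzero
point of `D ∩ (-K)` is precisely a point `f(y)` that ε-dominates `f(xbar)`. -/

section coneGen

variable {E : Type*} [AddCommGroup E] [Module ℝ E]

lemma subset_coneGen (D : Set E) : D ⊆ coneGen D :=
  fun d hd => ⟨1, zero_le_one, d, hd, (one_smul ℝ d).symm⟩

lemma zero_mem_coneGen {D : Set E} (hD : D.Nonempty) : (0 : E) ∈ coneGen D :=
  let ⟨d, hd⟩ := hD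
  ⟨0, le_rfl, d, hd, (zero_smul ℝ d).symm⟩

lemma neg_smul_mem_of_smul_mem {C : Set E} (hC : ∀ t : ℝ, 0 ≤ t → ∀ v ∈ C, t • v ∈ C) :
    ∀ t : ℝ, 0 ≤ t → ∀ v ∈ -C, t • v ∈ -C := by
  intro t ht v hv
  rw [mem_neg, ← smul_neg]
  exact hC t ht (-v) hv

lemma coneGen_inter_eq_zero_iff {D C : Set E} (hD : D.Nonempty) (hC0 : (0 : E) ∈ C)
    (hC : ∀ t : ℝ, 0 ≤ t → ∀ v ∈ C, t • v ∈ C) :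
    coneGen D ∩ C = {0} ↔ ∀ d ∈ D, d ∈ C → d = 0 := by
  constructor
  · intro h d hd hdC
    have hd0 : d ∈ coneGen D ∩ C := ⟨subset_coneGen D hd, hdC⟩
    rwa [h, mem_singleton_iff] at hd0
  · intro h
    refine eq_singleton_iff_unique_mem.mpr ⟨⟨zero_mem_coneGen hD, hC0⟩, ?_⟩
    rintro _ ⟨⟨t, ht, d, hd, rfl⟩, htdC⟩
    rcases ht.eq_or_lt with rfl | htpos
    · exact zero_smul ℝ d
    · have hdC : d ∈ C := by
        simpa [smul_smul, inv_mul_cancel₀ htpos.ne'] using hC t⁻¹ (inv_nonneg.mpr ht) _ htdC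
      rw [h d hd hdC, smul_zero]

end coneGen

theorem stmt_1_general {n m : ℕ} (X : Set (Fin n → ℝ))
    (f : (Fin n → ℝ) → (Fin m → ℝ))
    (K : Set (Fin m → ℝ)) (hKne : K.Nonempty)
    (hKcone : ∀ t : ℝ, 0 ≤ t → ∀ v ∈ K, t • v ∈ K)
    (ε : Fin m → ℝ)
    (xbar : Fin n → ℝ) (hxbar : xbar ∈ X) :
    (¬ ∃ y ∈ X, f xbar - ε - f y ∈ K ∧ f y ≠ f xbar - ε) ↔
      coneGen ((fun x => f x - (f xbar - ε)) '' X) ∩ (-K) = {0} := by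
  have h0K : (0 : Fin m → ℝ) ∈ -K := by
    obtain ⟨v, hv⟩ := hKne
    simpa using hKcone 0 le_rfl v hv
  rw [coneGen_inter_eq_zero_iff ⟨_, mem_image_of_mem _ hxbar⟩ h0K
    (neg_smul_mem_of_smul_mem hKcone), forall_mem_image]
  simp only [mem_neg, neg_sub, sub_eq_zero, not_exists, not_and, not_not]

/-- Let `X ⊆ ℝ^n` be nonempty, `f : ℝ^n → ℝ^m`, `K ⊆ ℝ^m` a closed convex cone,
and `ε ∈ ℝ^m_+`. A point `xbar ∈ X` is an ε-efficient solution iff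
`cone [f(X) - (f(xbar) - ε)] ∩ (-K) = {0}`. -/
theorem stmt_1 {n m : ℕ} (X : Set (Fin n → ℝ)) (hX : X.Nonempty)
    (f : (Fin n → ℝ) → (Fin m → ℝ))
    (K : Set (Fin m → ℝ)) (hKne : K.Nonempty)
    (hKcone : ∀ t : ℝ, 0 ≤ t → ∀ v ∈ K, t • v ∈ K)
    (hKclosed : IsClosed K)
    (hKconvex : Convex ℝ K)
    (ε : Fin m → ℝ) (hε : ∀ i, 0 ≤ ε i)
    (xbar : Fin n → ℝ) (hxbar : xbar ∈ X) :
    (¬ ∃ y ∈ X, f xbar - ε - f y ∈ K ∧ f y ≠ f xbar - ε) ↔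
      coneGen ((fun x => f x - (f xbar - ε)) '' X) ∩ (-K) = {0} :=
  stmt_1_general X f K hKne hKcone ε xbar hxbar
end

section
/- Let X ⊆ ℝ^n be a nonempty polyhedral convex set, f : ℝ^n → ℝ^m an affine map, and K ⊆ ℝ^m a pointed polyhedral convex cone (K ∩ (−K) = {0}). Then a point x̄ ∈ X is a Benson properly efficient solution, i.e., cl cone[f(X) + K − f(x̄)] ∩ (−K) = {0}, if and only if x̄ is an efficient solution, i.e., there exists no y ∈ X with f(x̄) − f(y) ∈ K and f(y) ≠ f(x̄). -/
/-!
For a pointed convex cone `K`, efficiency of `x̄` says exactly that `cone (f(X) - f x̄ + K)` meets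
`-K` only in `0`, so the point is that this cone is closed. It equals `f.linear (cone (X - x̄)) + K`,
and for `X = {x | ∀ i, ℓᵢ x ≤ bᵢ}` the cone `cone (X - x̄)` is the projection of the homogenized
polyhedron `{(u, s) | 0 ≤ s ∧ ∀ i, ℓᵢ u ≤ s (bᵢ - ℓᵢ x̄)}`. By Fourier–Motzkin elimination, linear
images and Minkowski sums of polyhedra (finite intersections of half-spaces) are polyhedra, so the
cone is a polyhedron and hence closed.
-/

open Set Pointwise

theorem Set.Finite.exists_between_of_le {α : Type*} [LinearOrder α] [Nonempty α] {L U : Set α}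
    (hL : L.Finite) (hU : U.Finite) (h : ∀ l ∈ L, ∀ u ∈ U, l ≤ u) :
    ∃ t, (∀ l ∈ L, l ≤ t) ∧ ∀ u ∈ U, t ≤ u := by
  rcases L.eq_empty_or_nonempty with rfl | hne
  · obtain ⟨t, ht⟩ := hU.bddBelow
    exact ⟨t, by simp, ht⟩
  · obtain ⟨a, ha, hmax⟩ := Set.exists_max_image L id hL hne
    exact ⟨a, hmax, h a ha⟩

section FourierMotzkin

variable {𝕜 ι : Type*} [Field 𝕜] [LinearOrder 𝕜] [IsStrictOrderedRing 𝕜]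

theorem exists_forall_add_mul_le_iff {H : Set ι} (hH : H.Finite) (g c b : ι → 𝕜) :
    (∃ t, ∀ i ∈ H, g i + t * c i ≤ b i) ↔
      (∀ i ∈ H, c i = 0 → g i ≤ b i) ∧
        ∀ i ∈ H, ∀ k ∈ H, c i < 0 → 0 < c k → c k * g i - c i * g k ≤ c k * b i - c i * b k := by
  constructor
  · rintro ⟨t, ht⟩
    refine ⟨fun i hi hc => by simpa [hc] using ht i hi, fun i hi k hk hci hck => ?_⟩
    nlinarith [mul_le_mul_of_nonneg_left (ht i hi) hck.le,
      mul_le_mul_of_nonneg_left (ht k hk) (neg_nonneg.2 hci.le)]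
  · rintro ⟨hzero, hpair⟩
    set r : ι → 𝕜 := fun i => (b i - g i) / c i
    have hr : ∀ i, c i ≠ 0 → c i * r i = b i - g i := fun i hi => mul_div_cancel₀ _ hi
    obtain ⟨t, hlow, hup⟩ := Set.Finite.exists_between_of_le
      ((hH.subset (sep_subset H fun i => c i < 0)).image r)
      ((hH.subset (sep_subset H fun i => 0 < c i)).image r)
      (by
        rintro _ ⟨i, ⟨hi, hci⟩, rfl⟩ _ ⟨k, ⟨hk, hck⟩, rfl⟩
        have := hpair i hi k hk hci hck
        nlinarith [hr i hci.ne, hr k hck.ne', mul_neg_of_neg_of_pos hci hck])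
    refine ⟨t, fun i hi => ?_⟩
    rcases lt_trichotomy (c i) 0 with hci | hci | hci
    · have := hlow _ ⟨i, ⟨hi, hci⟩, rfl⟩
      nlinarith [hr i hci.ne]
    · simpa [hci] using hzero i hi hci
    · have := hup _ ⟨i, ⟨hi, hci⟩, rfl⟩
      nlinarith [hr i hci.ne']

end FourierMotzkin

section Polyhedral

variable {𝕜 E F : Type*} [Field 𝕜] [LinearOrder 𝕜]
  [AddCommGroup E] [Module 𝕜 E] [AddCommGroup F] [Module 𝕜 F]

variable (𝕜) in
def IsPolyhedral (S : Set E) : Prop :=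
  ∃ H : Set (Module.Dual 𝕜 E × 𝕜), H.Finite ∧ S = {x | ∀ h ∈ H, h.1 x ≤ h.2}

theorem isPolyhedral_setOf_forall_le {ι : Type*} [Finite ι] (ℓ : ι → Module.Dual 𝕜 E)
    (b : ι → 𝕜) : IsPolyhedral 𝕜 {x | ∀ i, ℓ i x ≤ b i} :=
  ⟨range fun i => (ℓ i, b i), finite_range _, by simp⟩

namespace IsPolyhedral

theorem inter {S T : Set E} (hS : IsPolyhedral 𝕜 S) (hT : IsPolyhedral 𝕜 T) :
    IsPolyhedral 𝕜 (S ∩ T) := by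
  obtain ⟨H, hH, rfl⟩ := hS
  obtain ⟨H', hH', rfl⟩ := hT
  exact ⟨H ∪ H', hH.union hH', by ext; simp [or_imp, forall_and]⟩

theorem preimage {S : Set F} (hS : IsPolyhedral 𝕜 S) (L : E →ₗ[𝕜] F) :
    IsPolyhedral 𝕜 (L ⁻¹' S) := by
  obtain ⟨H, hH, rfl⟩ := hS
  exact ⟨(fun h => (h.1 ∘ₗ L, h.2)) '' H, hH.image _, by
    ext x
    simp only [mem_preimage, mem_ofPred_eq, forall_mem_image]
    rfl⟩

theorem image_linearEquiv {S : Set E} (hS : IsPolyhedral 𝕜 S) (e : E ≃ₗ[𝕜] F) :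
    IsPolyhedral 𝕜 (e '' S) := by
  rw [e.image_eq_preimage_symm]
  exact hS.preimage e.symm.toLinearMap

theorem prod {S : Set E} {T : Set F} (hS : IsPolyhedral 𝕜 S) (hT : IsPolyhedral 𝕜 T) :
    IsPolyhedral 𝕜 (S ×ˢ T) :=
  (hS.preimage (LinearMap.fst 𝕜 E F)).inter (hT.preimage (LinearMap.snd 𝕜 E F))

end IsPolyhedral

theorem isPolyhedral_singleton_zero [IsStrictOrderedRing 𝕜] [FiniteDimensional 𝕜 E] :
    IsPolyhedral 𝕜 ({0} : Set E) := by
  set b := Module.finBasis 𝕜 E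
  convert (isPolyhedral_setOf_forall_le b.coord 0).inter
    (isPolyhedral_setOf_forall_le (fun i => -b.coord i) 0)
  ext x
  simp [← forall_and, ← le_antisymm_iff, ← b.forall_coord_eq_zero_iff]

end Polyhedral

section Projection

theorem Module.Dual.apply_prod {𝕜 E : Type*} [Field 𝕜] [AddCommGroup E] [Module 𝕜 E]
    (ℓ : Module.Dual 𝕜 (E × 𝕜)) (x : E) (t : 𝕜) :
    ℓ (x, t) = ℓ (x, 0) + t * ℓ (0, 1) := by
  rw [← smul_eq_mul, ← map_smul, ← map_add]
  simp

variable {𝕜 E F : Type*} [Field 𝕜] [LinearOrder 𝕜] [IsStrictOrderedRing 𝕜]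
  [AddCommGroup E] [Module 𝕜 E] [AddCommGroup F] [Module 𝕜 F]

namespace IsPolyhedral

theorem image_fst {S : Set (E × 𝕜)} (hS : IsPolyhedral 𝕜 S) :
    IsPolyhedral 𝕜 (Prod.fst '' S) := by
  classical
  obtain ⟨H, hH, rfl⟩ := hS
  set g : Module.Dual 𝕜 (E × 𝕜) × 𝕜 → Module.Dual 𝕜 E := fun h => h.1 ∘ₗ LinearMap.inl 𝕜 E 𝕜
  set c : Module.Dual 𝕜 (E × 𝕜) × 𝕜 → 𝕜 := fun h => h.1 (0, 1)
  -- Fourier–Motzkin: keep the constraints not involving the last coordinate, and eliminate it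
  -- from each pair of constraints whose coefficients `c` on it have opposite signs
  refine ⟨(fun h => (g h, h.2)) '' {h ∈ H | c h = 0} ∪
    (fun hk => (c hk.2 • g hk.1 - c hk.1 • g hk.2, c hk.2 * hk.1.2 - c hk.1 * hk.2.2)) ''
      {hk ∈ H ×ˢ H | c hk.1 < 0 ∧ 0 < c hk.2},
    ((hH.subset (sep_subset _ _)).image _).union (((hH.prod hH).subset (sep_subset _ _)).image _),
    ?_⟩
  ext x
  have hfst : x ∈ Prod.fst '' {p : E × 𝕜 | ∀ h ∈ H, h.1 p ≤ h.2} ↔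
      ∃ t, ∀ h ∈ H, g h x + t * c h ≤ h.2 := by
    simp [g, c, ← Module.Dual.apply_prod]
  rw [mem_ofPred_eq, hfst, exists_forall_add_mul_le_iff hH (fun h => g h x) c Prod.snd]
  simp only [mem_union, or_imp, forall_and, forall_mem_image, mem_prod, and_imp, mem_ofPred_eq,
    Prod.forall, LinearMap.sub_apply, LinearMap.smul_apply, smul_eq_mul]
  exact and_congr Iff.rfl (forall₂_congr fun _ _ => ⟨fun h _ _ hh hk => h hh _ _ hk,
    fun h hh _ _ hk => h _ _ hh hk⟩)

theorem image_snd {d : ℕ} {S : Set ((Fin d → 𝕜) × F)} (hS : IsPolyhedral 𝕜 S) :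
    IsPolyhedral 𝕜 (Prod.snd '' S) := by
  induction d with
  | zero =>
    convert hS.preimage (LinearMap.inr 𝕜 (Fin 0 → 𝕜) F)
    ext y
    refine ⟨?_, fun hy => ⟨_, hy, rfl⟩⟩
    rintro ⟨p, hp, rfl⟩
    show (0, p.2) ∈ S
    rwa [show ((0 : Fin 0 → 𝕜), p.2) = p from Prod.ext (Subsingleton.elim _ _) rfl]
  | succ d ih =>
    let e := ((Fin.consLinearEquiv 𝕜 fun _ => 𝕜).symm.prodCongr (LinearEquiv.refl 𝕜 F)) ≪≫ₗ
        LinearEquiv.prodAssoc 𝕜 𝕜 (Fin d → 𝕜) F ≪≫ₗ LinearEquiv.prodComm 𝕜 𝕜 _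
    have : Prod.snd '' S = Prod.snd '' (Prod.fst '' (e '' S)) := by
      simp only [image_image]
      rfl
    rw [this]
    exact ih (hS.image_linearEquiv e).image_fst

end IsPolyhedral
end Projection

namespace IsPolyhedral

variable {𝕜 E F : Type*} [Field 𝕜] [LinearOrder 𝕜] [IsStrictOrderedRing 𝕜]
  [AddCommGroup E] [Module 𝕜 E] [FiniteDimensional 𝕜 E]
  [AddCommGroup F] [Module 𝕜 F] [FiniteDimensional 𝕜 F]

theorem image {S : Set E} (hS : IsPolyhedral 𝕜 S) (L : E →ₗ[𝕜] F) : IsPolyhedral 𝕜 (L '' S) := by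
  let φ := (Module.finBasis 𝕜 E).equivFun.symm.toLinearMap
  have hgraph : IsPolyhedral 𝕜 {p : (Fin _ → 𝕜) × F | φ p.1 ∈ S ∧ p.2 - L (φ p.1) = 0} :=
    (hS.preimage (φ ∘ₗ LinearMap.fst 𝕜 _ F)).inter
      (isPolyhedral_singleton_zero.preimage (LinearMap.snd 𝕜 _ F - L ∘ₗ φ ∘ₗ LinearMap.fst 𝕜 _ F))
  convert hgraph.image_snd
  ext y
  constructor
  · rintro ⟨x, hx, rfl⟩
    have hφ : φ ((Module.finBasis 𝕜 E).equivFun x) = x :=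
      (Module.finBasis 𝕜 E).equivFun.symm_apply_apply x
    exact ⟨((Module.finBasis 𝕜 E).equivFun x, L x), ⟨by rwa [hφ], by rw [hφ, sub_self]⟩, rfl⟩
  · rintro ⟨⟨u, y⟩, ⟨hu, hy⟩, rfl⟩
    exact ⟨φ u, hu, (sub_eq_zero.1 hy).symm⟩

theorem add {S T : Set E} (hS : IsPolyhedral 𝕜 S) (hT : IsPolyhedral 𝕜 T) :
    IsPolyhedral 𝕜 (S + T) := by
  rw [← image2_add, ← image_prod]
  exact (hS.prod hT).image (LinearMap.fst 𝕜 E E + LinearMap.snd 𝕜 E E)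

end IsPolyhedral

theorem IsPolyhedral.isClosed {E : Type*} [AddCommGroup E] [Module ℝ E] [TopologicalSpace E]
    [IsTopologicalAddGroup E] [ContinuousSMul ℝ E] [T2Space E] [FiniteDimensional ℝ E]
    {S : Set E} (hS : IsPolyhedral ℝ S) : IsClosed S := by
  obtain ⟨H, -, rfl⟩ := hS
  simp only [ofPred_forall]
  exact isClosed_biInter fun h _ =>
    isClosed_le (LinearMap.continuous_of_finiteDimensional h.1) continuous_const

section Cone

variable {E F : Type*} [AddCommGroup E] [Module ℝ E] [AddCommGroup F] [Module ℝ F]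

theorem coneGen_image (L : E →ₗ[ℝ] F) (A : Set E) : coneGen (L '' A) = L '' coneGen A := by
  ext z
  constructor
  · rintro ⟨t, ht, _, ⟨a, ha, rfl⟩, rfl⟩
    exact ⟨t • a, ⟨t, ht, a, ha, rfl⟩, map_smul L t a⟩
  · rintro ⟨_, ⟨t, ht, a, ha, rfl⟩, rfl⟩
    exact ⟨t, ht, L a, mem_image_of_mem L ha, map_smul L t a⟩

theorem coneGen_add_pointedCone {A : Set E} (hA : (0 : E) ∈ A) (C : PointedCone ℝ E) :
    coneGen (A + (C : Set E)) = coneGen A + (C : Set E) := by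
  ext z
  constructor
  · rintro ⟨t, ht, _, ⟨a, ha, c, hc, rfl⟩, rfl⟩
    exact ⟨t • a, ⟨t, ht, a, ha, rfl⟩, t • c, C.smul_mem ht hc, (smul_add t a c).symm⟩
  · rintro ⟨_, ⟨t, ht, a, ha, rfl⟩, c, hc, rfl⟩
    rcases ht.eq_or_lt with rfl | ht
    · exact ⟨1, zero_le_one, 0 + c, add_mem_add hA hc, by simp⟩
    · refine ⟨t, ht.le, a + t⁻¹ • c, add_mem_add ha (C.smul_mem (inv_nonneg.2 ht.le) hc), ?_⟩
      rw [smul_add, smul_inv_smul₀ ht.ne']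

theorem mem_coneGen_image_sub_iff {H : Set (Module.Dual ℝ E × ℝ)} {x : E}
    (hx : ∀ h ∈ H, h.1 x ≤ h.2) (u : E) :
    u ∈ coneGen ((· - x) '' {y | ∀ h ∈ H, h.1 y ≤ h.2}) ↔
      ∃ s, 0 ≤ s ∧ ∀ h ∈ H, h.1 u ≤ s * (h.2 - h.1 x) := by
  constructor
  · rintro ⟨t, ht, _, ⟨y, hy, rfl⟩, rfl⟩
    refine ⟨t, ht, fun h hh => ?_⟩
    rw [map_smul, map_sub, smul_eq_mul]
    exact mul_le_mul_of_nonneg_left (by linarith [hy h hh]) ht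
  · rintro ⟨s, hs, hu⟩
    rcases hs.eq_or_lt with rfl | hs
    · refine ⟨1, zero_le_one, u, ⟨x + u, fun h hh => ?_, add_sub_cancel_left x u⟩,
        (one_smul ℝ u).symm⟩
      have := hu h hh
      rw [map_add]
      linarith [hx h hh]
    · refine ⟨s, hs.le, s⁻¹ • u, ⟨x + s⁻¹ • u, fun h hh => ?_, add_sub_cancel_left x _⟩,
        (smul_inv_smul₀ hs.ne' u).symm⟩
      have := mul_le_mul_of_nonneg_left (hu h hh) (inv_nonneg.2 hs.le)
      rw [inv_mul_cancel_left₀ hs.ne'] at this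
      rw [map_add, map_smul, smul_eq_mul]
      linarith

theorem IsPolyhedral.coneGen_image_sub {P : Set E} (hP : IsPolyhedral ℝ P) {x : E} (hx : x ∈ P) :
    IsPolyhedral ℝ (coneGen ((· - x) '' P)) := by
  obtain ⟨H, hH, rfl⟩ := hP
  let hom : Module.Dual ℝ E × ℝ → Module.Dual ℝ (E × ℝ) × ℝ := fun h =>
    (h.1 ∘ₗ LinearMap.fst ℝ E ℝ - (h.2 - h.1 x) • LinearMap.snd ℝ E ℝ, 0)
  have hQ : IsPolyhedral ℝ {p : E × ℝ | ∀ h ∈ insert (-LinearMap.snd ℝ E ℝ, 0) (hom '' H),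
      h.1 p ≤ h.2} :=
    ⟨_, (hH.image _).insert _, rfl⟩
  convert hQ.image_fst
  ext u
  rw [mem_coneGen_image_sub_iff hx]
  simp only [mem_image, Prod.exists, exists_and_right, exists_eq_right]
  simp only [mem_ofPred_eq, forall_mem_insert, forall_mem_image, hom]
  refine exists_congr fun s => and_congr (by simp) (forall₂_congr fun h _ => ?_)
  simp [mul_comm]

end Cone

theorem IsPolyhedral.coneGen_image_sub_add {E F : Type*} [AddCommGroup E] [Module ℝ E]
    [FiniteDimensional ℝ E] [AddCommGroup F] [Module ℝ F] [FiniteDimensional ℝ F]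
    {X : Set E} (hX : IsPolyhedral ℝ X) {x : E} (hx : x ∈ X) (f : E →ᵃ[ℝ] F)
    {K : PointedCone ℝ F} (hK : IsPolyhedral ℝ (K : Set F)) :
    IsPolyhedral ℝ (coneGen (((fun y => f y - f x) '' X) + (K : Set F))) := by
  have himage : (fun y => f y - f x) '' X = f.linear '' ((· - x) '' X) := by
    rw [image_image]
    exact image_congr fun y _ => (f.linearMap_vsub y x).symm
  have h0 : (0 : F) ∈ f.linear '' ((· - x) '' X) := ⟨0, ⟨x, hx, sub_self x⟩, map_zero _⟩
  rw [himage, coneGen_add_pointedCone h0, coneGen_image]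
  exact ((hX.coneGen_image_sub hx).image f.linear).add hK

section Efficiency

variable {E F : Type*} [AddCommGroup E] [Module ℝ E] [AddCommGroup F] [Module ℝ F]

def IsEfficient (X : Set E) (f : E → F) (K : Set F) (x : E) : Prop :=
  ¬ ∃ y ∈ X, f x - f y ∈ K ∧ f y ≠ f x

def IsBensonProperlyEfficient [TopologicalSpace F] (X : Set E) (f : E → F) (K : Set F) (x : E) :
    Prop :=
  closure (coneGen (((fun y => f y - f x) '' X) + K)) ∩ -K = {0}

theorem isBensonProperlyEfficient_iff_isEfficient [FiniteDimensional ℝ E] [TopologicalSpace F]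
    [IsTopologicalAddGroup F] [ContinuousSMul ℝ F] [T2Space F] [FiniteDimensional ℝ F]
    {X : Set E} (hX : IsPolyhedral ℝ X) (f : E →ᵃ[ℝ] F) {K : PointedCone ℝ F}
    (hK : IsPolyhedral ℝ (K : Set F)) (hKpointed : (K : Set F) ∩ -K = {0}) {x : E} (hx : x ∈ X) :
    IsBensonProperlyEfficient X f K x ↔ IsEfficient X f K x := by
  rw [IsBensonProperlyEfficient, (hX.coneGen_image_sub_add hx f hK).isClosed.closure_eq]
  have hmem : ∀ y ∈ X, ∀ k ∈ K, f y - f x + k ∈ ((fun y => f y - f x) '' X) + (K : Set F) :=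
    fun y hy k hk => add_mem_add ⟨y, hy, rfl⟩ hk
  constructor
  · rintro hB ⟨y, hy, hyK, hne⟩
    have : f y - f x ∈ coneGen (((fun y => f y - f x) '' X) + (K : Set F)) ∩ -K :=
      ⟨⟨1, zero_le_one, _, hmem y hy 0 K.zero_mem, by simp⟩, by simpa using hyK⟩
    rw [hB] at this
    exact hne (sub_eq_zero.1 this)
  · intro heff
    refine subset_antisymm ?_ (singleton_subset_iff.2
      ⟨⟨0, le_rfl, _, hmem x hx 0 K.zero_mem, (zero_smul ℝ _).symm⟩, by simp⟩)
    rintro z ⟨⟨t, ht, _, ⟨_, ⟨y, hy, rfl⟩, k, hk, rfl⟩, rfl⟩, hz⟩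
    obtain rfl | ht := ht.eq_or_lt
    · simp
    rw [mem_neg, SetLike.mem_coe] at hz
    have hxy : f x - f y ∈ K := by
      have : f x - f y = t⁻¹ • -(t • (f y - f x + k)) + k := by
        rw [smul_neg, inv_smul_smul₀ ht.ne']
        abel
      rw [this]
      exact K.add_mem (K.smul_mem (inv_nonneg.2 ht.le) hz) hk
    have hfy : f y = f x := by_contra fun hne => heff ⟨y, hy, hxy, hne⟩
    have hzK : t • (f y - f x + k) ∈ K := by
      rw [hfy, sub_self, zero_add]
      exact K.smul_mem ht.le hk
    rw [← hKpointed]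
    exact ⟨hzK, hz⟩

end Efficiency

theorem isPolyhedral_setOf_sum_mul_le {𝕜 ι κ : Type*} [Field 𝕜] [LinearOrder 𝕜] [Finite ι]
    [Fintype κ] (a : ι → κ → 𝕜) (b : ι → 𝕜) :
    IsPolyhedral 𝕜 {x : κ → 𝕜 | ∀ i, ∑ j, a i j * x j ≤ b i} := by
  classical
  exact isPolyhedral_setOf_forall_le (fun i => dotProductEquiv 𝕜 κ (a i)) b

theorem isPolyhedral_positive {𝕜 ι : Type*} [Field 𝕜] [LinearOrder 𝕜] [IsStrictOrderedRing 𝕜]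
    [Finite ι] : IsPolyhedral 𝕜 (PointedCone.positive 𝕜 (ι → 𝕜) : Set (ι → 𝕜)) := by
  have : (PointedCone.positive 𝕜 (ι → 𝕜) : Set (ι → 𝕜)) =
      {x | ∀ j, (-LinearMap.proj j : Module.Dual 𝕜 (ι → 𝕜)) x ≤ 0} := by
    ext x
    simp [Pi.le_def]
  rw [this]
  exact isPolyhedral_setOf_forall_le _ _

theorem setOf_exists_nonneg_sum_smul_eq {F ι : Type*} [AddCommGroup F] [Module ℝ F] [Fintype ι]
    (v : ι → F) : {x | ∃ t : ι → ℝ, (∀ j, 0 ≤ t j) ∧ x = ∑ j, t j • v j} =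
      ((PointedCone.positive ℝ (ι → ℝ)).map (Fintype.linearCombination ℝ v) : Set F) := by
  ext x
  simp [Pi.le_def, eq_comm, Fintype.linearCombination_apply]

theorem stmt_8_general {n m : ℕ} (X : Set (Fin n → ℝ))
    (hXpoly : ∃ (p : ℕ) (a : Fin p → Fin n → ℝ) (b : Fin p → ℝ),
      X = {x | ∀ i, ∑ j, a i j * x j ≤ b i})
    (f : (Fin n → ℝ) →ᵃ[ℝ] (Fin m → ℝ))
    (K : Set (Fin m → ℝ))
    (hKpoly : ∃ (q : ℕ) (v : Fin q → Fin m → ℝ),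
      K = {x | ∃ t : Fin q → ℝ, (∀ j, 0 ≤ t j) ∧ x = ∑ j, t j • v j})
    (hKpointed : K ∩ (-K) = {0})
    (xbar : Fin n → ℝ) (hxbar : xbar ∈ X) :
    closure (coneGen (((fun x => f x - f xbar) '' X) + K)) ∩ (-K) = {0} ↔
      ¬ ∃ y ∈ X, f xbar - f y ∈ K ∧ f y ≠ f xbar := by
  obtain ⟨p, a, b, rfl⟩ := hXpoly
  obtain ⟨q, v, rfl⟩ := hKpoly
  rw [setOf_exists_nonneg_sum_smul_eq] at hKpointed ⊢
  have hK : IsPolyhedral ℝ ((PointedCone.positive ℝ (Fin q → ℝ)).map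
      (Fintype.linearCombination ℝ v) : Set (Fin m → ℝ)) :=
    isPolyhedral_positive.image _
  exact isBensonProperlyEfficient_iff_isEfficient (isPolyhedral_setOf_sum_mul_le a b) f hK
    hKpointed hxbar

/-- In a linear vector optimization problem (polyhedral convex `X`, affine `f`, pointed
polyhedral convex cone `K`), a point `x̄ ∈ X` is a Benson properly efficient solution iff it
is an efficient solution. -/
theorem stmt_8 {n m : ℕ} (X : Set (Fin n → ℝ)) (hXne : X.Nonempty)
    (hXpoly : ∃ (p : ℕ) (a : Fin p → Fin n → ℝ) (b : Fin p → ℝ),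
      X = {x | ∀ i, ∑ j, a i j * x j ≤ b i})
    (f : (Fin n → ℝ) →ᵃ[ℝ] (Fin m → ℝ))
    (K : Set (Fin m → ℝ))
    (hKpoly : ∃ (q : ℕ) (v : Fin q → Fin m → ℝ),
      K = {x | ∃ t : Fin q → ℝ, (∀ j, 0 ≤ t j) ∧ x = ∑ j, t j • v j})
    (hKpointed : K ∩ (-K) = {0})
    (xbar : Fin n → ℝ) (hxbar : xbar ∈ X) :
    closure (coneGen (((fun x => f x - f xbar) '' X) + K)) ∩ (-K) = {0} ↔
      ¬ ∃ y ∈ X, f xbar - f y ∈ K ∧ f y ≠ f xbar :=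
  stmt_8_general X hXpoly f K hKpoly hKpointed xbar hxbar
end

section
/- Let X ⊆ ℝ^n be a nonempty polyhedral convex set, f : ℝ^n → ℝ^m an affine map, the ordering cone K = ℝ^m_+, and ε ∈ ℝ^m_+ \ {0}. If there exists at least one x̄ ∈ X with cl cone[f(X) + ℝ^m_+ − (f(x̄) − ε)] ∩ (−ℝ^m_+) = {0}, then the set of points x ∈ X satisfying cl cone[f(X) + ℝ^m_+ − (f(x) − ε)] ∩ (−ℝ^m_+) = {0} coincides with the set of ε-efficient solutions; that is, either the ε-properly efficient solution set is empty or it equals the ε-efficient solution set. -/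
open Set Pointwise

/-- The nonnegative orthant `ℝ^m_+`. -/
def orthant (m : ℕ) : Set (Fin m → ℝ) := {x | ∀ i, 0 ≤ x i}

/-!
Write `X = {x | A x ≤ b}` and `c = f x - ε`. Every element of `cone (f(X) + ℝ^m_+ - c)` has the
form `f.linear d + t • (f 0 - c) + k` with `A d ≤ t • b`, `t ≥ 0`, `k ≥ 0`, i.e. lies in the image
of a polyhedral cone under a linear map. By Fourier–Motzkin elimination such an image is again
polyhedral, hence closed, so the closure of the cone has the same description. For an element
`w ≤ 0` of it: if `t > 0`, then `w = t • (f (t⁻¹ • d) - c) + k`, and `ε`-efficiency of `x` forces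
`w = 0`; if `t = 0`, then `d` is a recession direction of `X`, so `w = f.linear d + k` lies in the
closed cone at every reference point, in particular at the one of the given properly efficient
solution, which forces `w = 0` as well.
-/

lemma Finset.exists_between_of_forall_le {α ι κ : Type*} [LinearOrder α] [Nonempty α]
    (s : Finset ι) (u : Finset κ) (l : ι → α) (r : κ → α)
    (h : ∀ i ∈ s, ∀ j ∈ u, l i ≤ r j) : ∃ t, (∀ i ∈ s, l i ≤ t) ∧ ∀ j ∈ u, t ≤ r j := by
  rcases u.eq_empty_or_nonempty with rfl | hu
  · obtain ⟨t, ht⟩ := (s.image l).exists_le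
    exact ⟨t, fun i hi => ht _ (Finset.mem_image_of_mem l hi), by simp⟩
  · exact ⟨u.inf' hu r, fun i hi => Finset.le_inf' hu r fun j hj => h i hi j hj,
      fun j hj => Finset.inf'_le r hj⟩

lemma LinearMap.apply_prod_eq_add {R M : Type*} [CommSemiring R] [AddCommMonoid M] [Module R M]
    (φ : M × R →ₗ[R] R) (x : M) (t : R) : φ (x, t) = φ (x, 0) + t * φ (0, 1) := by
  rw [← smul_eq_mul, ← map_smul, ← map_add]
  simp

namespace PointedCone

variable {𝕜 E F : Type*} [Field 𝕜] [LinearOrder 𝕜] [IsStrictOrderedRing 𝕜]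
  [AddCommGroup E] [Module 𝕜 E] [AddCommGroup F] [Module 𝕜 F]

lemma DualFG.comap {C : PointedCone 𝕜 F} (hC : C.DualFG .id) (L : E →ₗ[𝕜] F) :
    (C.comap L).DualFG .id := by
  classical
  obtain ⟨s, rfl⟩ := hC
  exact ⟨s.image (· ∘ₗ L), by ext; simp⟩

lemma DualFG.map_linearEquiv {C : PointedCone 𝕜 E} (hC : C.DualFG .id) (e : E ≃ₗ[𝕜] F) :
    (C.map (e : E →ₗ[𝕜] F)).DualFG .id := by
  convert hC.comap (e.symm : F →ₗ[𝕜] E) using 1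
  exact SetLike.coe_injective (e.image_eq_preimage_symm C)

lemma DualFG.prod {C : PointedCone 𝕜 E} {D : PointedCone 𝕜 F} (hC : C.DualFG .id)
    (hD : D.DualFG .id) : DualFG .id (C.prod D) := by
  convert (hC.comap (LinearMap.fst 𝕜 E F)).inf (hD.comap (LinearMap.snd 𝕜 E F)) using 1
  ext; simp

lemma dualFG_positive_pi (ι : Type*) [Fintype ι] : (positive 𝕜 (ι → 𝕜)).DualFG .id := by
  classical
  exact ⟨Finset.univ.image (LinearMap.proj ·), by ext; simp [Pi.le_def]⟩

lemma dualFG_positive : (positive 𝕜 𝕜).DualFG .id :=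
  ⟨{LinearMap.id}, by ext; simp⟩

lemma dualFG_bot [FiniteDimensional 𝕜 E] : (⊥ : PointedCone 𝕜 E).DualFG .id := by
  classical
  let b := Module.finBasis 𝕜 E
  refine ⟨Finset.univ.image b.coord ∪ Finset.univ.image (-b.coord ·), ?_⟩
  ext x
  simp only [Finset.coe_union, Finset.coe_image, Finset.coe_univ, Set.image_univ, mem_dual,
    Set.mem_union, Set.mem_range, or_imp, forall_and, forall_exists_index, forall_apply_eq_imp_iff,
    LinearMap.neg_apply, neg_nonneg, LinearMap.id_apply, Submodule.mem_bot]
  rw [← b.forall_coord_eq_zero_iff, ← forall_and]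
  exact forall_congr' fun i => le_antisymm_iff.symm.trans eq_comm

section FourierMotzkin

variable (s : Finset (Module.Dual 𝕜 (E × 𝕜)))

open Classical in
/-- The inequalities of `s` not involving the last coordinate, together with the positive
combinations of a lower and an upper bound on it in which the last coordinate cancels. -/
noncomputable def fourierMotzkin : Finset (Module.Dual 𝕜 E) :=
  (s.filter (· (0, 1) = 0)).image (· ∘ₗ LinearMap.inl 𝕜 E 𝕜) ∪
    (s.filter (0 < · (0, 1)) ×ˢ s.filter (· (0, 1) < 0)).image
      fun q => (q.1 (0, 1) • q.2 - q.2 (0, 1) • q.1) ∘ₗ LinearMap.inl 𝕜 E 𝕜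

variable {s}

lemma mem_dual_fourierMotzkin {x : E} :
    x ∈ dual .id (fourierMotzkin s : Set (Module.Dual 𝕜 E)) ↔
      (∀ φ ∈ s, φ (0, 1) = 0 → 0 ≤ φ (x, 0)) ∧
      ∀ φ ψ, φ ∈ s → 0 < φ (0, 1) → ψ ∈ s → ψ (0, 1) < 0 →
        0 ≤ φ (0, 1) * ψ (x, 0) - ψ (0, 1) * φ (x, 0) := by
  simp only [fourierMotzkin, mem_dual, Finset.mem_coe, Finset.forall_mem_union,
    Finset.forall_mem_image, Finset.mem_filter, Finset.mem_product, and_imp, Prod.forall,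
    LinearMap.id_apply, LinearMap.comp_apply, LinearMap.inl_apply, LinearMap.sub_apply,
    LinearMap.smul_apply, smul_eq_mul]

lemma mem_dual_fourierMotzkin_of_mem_dual {x : E} {t : 𝕜}
    (h : (x, t) ∈ dual .id (s : Set (Module.Dual 𝕜 (E × 𝕜)))) :
    x ∈ dual .id (fourierMotzkin s : Set (Module.Dual 𝕜 E)) := by
  refine mem_dual_fourierMotzkin.2 ⟨fun φ hφ hφ₁ => ?_, fun φ ψ hφ hφ₁ hψ hψ₁ => ?_⟩
  · simpa [φ.apply_prod_eq_add x t, hφ₁] using h hφ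
  · have hφt := h hφ
    have hψt := h hψ
    simp only [LinearMap.id_apply, LinearMap.apply_prod_eq_add _ x t] at hφt hψt
    nlinarith

lemma exists_mem_dual_of_mem_dual_fourierMotzkin {x : E}
    (h : x ∈ dual .id (fourierMotzkin s : Set (Module.Dual 𝕜 E))) :
    ∃ t, (x, t) ∈ dual .id (s : Set (Module.Dual 𝕜 (E × 𝕜))) := by
  classical
  obtain ⟨hzero, hpair⟩ := mem_dual_fourierMotzkin.1 h
  obtain ⟨t, hlow, hupp⟩ := Finset.exists_between_of_forall_le
    (s.filter (0 < · (0, 1))) (s.filter (· (0, 1) < 0))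
    (fun φ => -φ (x, 0) / φ (0, 1)) (fun ψ => ψ (x, 0) / -ψ (0, 1)) (by
      simp only [Finset.mem_filter, and_imp]
      intro φ hφ hφ₁ ψ hψ hψ₁
      rw [div_le_div_iff₀ hφ₁ (neg_pos.2 hψ₁)]
      nlinarith [hpair φ ψ hφ hφ₁ hψ hψ₁])
  simp only [Finset.mem_filter, and_imp] at hlow hupp
  refine ⟨t, fun φ hφ => ?_⟩
  rw [LinearMap.id_apply, φ.apply_prod_eq_add]
  rcases lt_trichotomy (φ (0, 1)) 0 with hφ₁ | hφ₁ | hφ₁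
  · have := hupp φ hφ hφ₁
    rw [le_div_iff₀ (neg_pos.2 hφ₁)] at this
    linarith
  · rw [hφ₁, mul_zero, add_zero]
    exact hzero φ hφ hφ₁
  · have := hlow φ hφ hφ₁
    rw [div_le_iff₀ hφ₁] at this
    linarith

end FourierMotzkin

theorem DualFG.map_fst {C : PointedCone 𝕜 (E × 𝕜)} (hC : C.DualFG .id) :
    (C.map (LinearMap.fst 𝕜 E 𝕜)).DualFG .id := by
  obtain ⟨s, rfl⟩ := hC
  refine ⟨fourierMotzkin s, le_antisymm (fun x hx => ?_) ?_⟩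
  · obtain ⟨t, ht⟩ := exists_mem_dual_of_mem_dual_fourierMotzkin hx
    exact ⟨(x, t), ht, rfl⟩
  · rintro _ ⟨⟨x, t⟩, hxt, rfl⟩
    exact mem_dual_fourierMotzkin_of_mem_dual hxt

theorem DualFG.map_fst_pi {N : ℕ} {C : PointedCone 𝕜 (E × (Fin N → 𝕜))} (hC : C.DualFG .id) :
    (C.map (LinearMap.fst 𝕜 E (Fin N → 𝕜))).DualFG .id := by
  induction N with
  | zero => exact hC.map_linearEquiv LinearEquiv.prodUnique
  | succ N ih =>
    let e : (E × (Fin (N + 1) → 𝕜)) ≃ₗ[𝕜] (E × (Fin N → 𝕜)) × 𝕜 :=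
      ((LinearEquiv.refl 𝕜 E).prodCongr ((Fin.consLinearEquiv 𝕜 fun _ => 𝕜).symm.trans
        (LinearEquiv.prodComm 𝕜 𝕜 _))).trans (LinearEquiv.prodAssoc 𝕜 E _ 𝕜).symm
    have : C.map (LinearMap.fst 𝕜 E _) = ((C.map e.toLinearMap).map (LinearMap.fst 𝕜 _ 𝕜)).map
        (LinearMap.fst 𝕜 E _) := by
      rw [map_map, map_map]
      rfl
    rw [this]
    exact ih (hC.map_linearEquiv e).map_fst

theorem DualFG.map [FiniteDimensional 𝕜 E] [FiniteDimensional 𝕜 F] {C : PointedCone 𝕜 E}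
    (hC : C.DualFG .id) (L : E →ₗ[𝕜] F) : (C.map L).DualFG .id := by
  let graph : PointedCone 𝕜 (F × E) := C.comap (LinearMap.snd 𝕜 F E) ⊓
    (⊥ : PointedCone 𝕜 F).comap (LinearMap.fst 𝕜 F E - L ∘ₗ LinearMap.snd 𝕜 F E)
  have hgraph : graph.DualFG .id := (hC.comap _).inf (dualFG_bot.comap _)
  let e : (F × E) ≃ₗ[𝕜] F × (Fin (Module.finrank 𝕜 E) → 𝕜) :=
    (LinearEquiv.refl 𝕜 F).prodCongr (Module.finBasis 𝕜 E).equivFun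
  have : C.map L = (graph.map e.toLinearMap).map (LinearMap.fst 𝕜 F _) := by
    rw [map_map]
    ext y
    simp [graph, e, sub_eq_zero, eq_comm (a := y)]
  rw [this]
  exact (hgraph.map_linearEquiv e).map_fst_pi

theorem DualFG.isClosed {V : Type*} [AddCommGroup V] [Module ℝ V] [TopologicalSpace V]
    [IsTopologicalAddGroup V] [ContinuousSMul ℝ V] [T2Space V] [FiniteDimensional ℝ V]
    {C : PointedCone ℝ V} (hC : C.DualFG .id) : IsClosed (C : Set V) := by
  obtain ⟨s, rfl⟩ := hC
  exact isClosed_dual fun φ => LinearMap.continuous_of_finiteDimensional φ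

end PointedCone

section ConeGen

variable {E : Type*} [AddCommGroup E] [Module ℝ E]

lemma zero_mem_coneGen_s10 {S : Set E} (hS : S.Nonempty) : (0 : E) ∈ coneGen S :=
  let ⟨s, hs⟩ := hS
  ⟨0, le_rfl, s, hs, (zero_smul ℝ s).symm⟩

open Filter Topology in
lemma mem_closure_coneGen_of_forall_add_smul_mem [TopologicalSpace E] [ContinuousAdd E]
    [ContinuousSMul ℝ E] {S : Set E} {s v : E} (h : ∀ t : ℝ, 0 ≤ t → s + t • v ∈ S) :
    v ∈ closure (coneGen S) := by
  have hlim : Tendsto (fun t : ℝ => t⁻¹ • (s + t • v)) atTop (𝓝 v) := by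
    have := ((tendsto_inv_atTop_zero (𝕜 := ℝ)).smul_const s).add_const v
    rw [zero_smul, zero_add] at this
    refine this.congr' ?_
    filter_upwards [eventually_gt_atTop 0] with t ht
    rw [smul_add, smul_smul, inv_mul_cancel₀ ht.ne', one_smul]
  exact mem_closure_of_tendsto hlim <|
    (eventually_ge_atTop 0).mono fun t ht => ⟨t⁻¹, inv_nonneg.2 ht, _, h t ht, rfl⟩

end ConeGen

lemma mem_orthant {m : ℕ} {x : Fin m → ℝ} : x ∈ orthant m ↔ 0 ≤ x := Iff.rfl

lemma mem_neg_orthant {m : ℕ} {x : Fin m → ℝ} : x ∈ -orthant m ↔ x ≤ 0 := by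
  rw [Set.mem_neg, mem_orthant, neg_nonneg]

section Homogenization

variable {ι κ : Type*} [Fintype κ]

open PointedCone Matrix

def homogenization (A : Matrix ι κ ℝ) (b : ι → ℝ) : PointedCone ℝ ((κ → ℝ) × ℝ) :=
  (positive ℝ (ι → ℝ)).comap
      ((LinearMap.id.smulRight b) ∘ₗ LinearMap.snd ℝ _ ℝ - A.mulVecLin ∘ₗ LinearMap.fst ℝ _ ℝ) ⊓
    (positive ℝ ℝ).comap (LinearMap.snd ℝ _ ℝ)

lemma mem_homogenization {A : Matrix ι κ ℝ} {b : ι → ℝ} {d : κ → ℝ} {t : ℝ} :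
    (d, t) ∈ homogenization A b ↔ A *ᵥ d ≤ t • b ∧ 0 ≤ t := by
  simp [homogenization]

lemma dualFG_homogenization [Fintype ι] (A : Matrix ι κ ℝ) (b : ι → ℝ) :
    (homogenization A b).DualFG .id :=
  ((dualFG_positive_pi ι).comap _).inf (dualFG_positive.comap _)

end Homogenization

section VectorOptimization

variable {α : Type*} {m : ℕ}

/-- `x̄` is `ε`-properly efficient iff `IsBensonProper f X (f x̄ - ε)`. -/
def IsBensonProper (f : α → Fin m → ℝ) (X : Set α) (c : Fin m → ℝ) : Prop :=
  closure (coneGen (((fun y => f y - c) '' X) + orthant m)) ∩ -orthant m = {0}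

/-- `x̄` is `ε`-efficient iff `IsNondominated f X (f x̄ - ε)`. -/
def IsNondominated (f : α → Fin m → ℝ) (X : Set α) (c : Fin m → ℝ) : Prop :=
  ∀ y ∈ X, c - f y ∈ orthant m → f y = c

lemma sub_mem_closure_coneGen {f : α → Fin m → ℝ} {X : Set α} {y : α} (hy : y ∈ X)
    (c : Fin m → ℝ) : f y - c ∈ closure (coneGen (((fun y => f y - c) '' X) + orthant m)) :=
  subset_closure
    ⟨1, zero_le_one, f y - c + 0, add_mem_add ⟨y, hy, rfl⟩ (mem_orthant.2 le_rfl), by simp⟩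

lemma IsBensonProper.isNondominated {f : α → Fin m → ℝ} {X : Set α} {c : Fin m → ℝ}
    (h : IsBensonProper f X c) : IsNondominated f X c := fun y hy hdom => by
  have : f y - c ∈ ({0} : Set (Fin m → ℝ)) := by
    rw [← h]
    refine ⟨sub_mem_closure_coneGen hy c, ?_⟩
    rwa [Set.mem_neg, neg_sub]
  exact sub_eq_zero.1 this

variable {ι κ : Type*} [Fintype κ] (A : Matrix ι κ ℝ) (b : ι → ℝ)
  (f : (κ → ℝ) →ᵃ[ℝ] (Fin m → ℝ))

open Matrix

lemma closure_coneGen_subset [Fintype ι] (c : Fin m → ℝ) :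
    closure (coneGen (((fun y => f y - c) '' {x | A *ᵥ x ≤ b}) + orthant m)) ⊆
      {w | ∃ (d : κ → ℝ) (t : ℝ) (k : Fin m → ℝ),
        A *ᵥ d ≤ t • b ∧ 0 ≤ t ∧ 0 ≤ k ∧ w = f.linear d + t • (f 0 - c) + k} := by
  let L : ((κ → ℝ) × ℝ) × (Fin m → ℝ) →ₗ[ℝ] Fin m → ℝ :=
    (f.linear.coprod (LinearMap.id.smulRight (f 0 - c))).coprod LinearMap.id
  let W := PointedCone.map L ((homogenization A b).prod (PointedCone.positive ℝ (Fin m → ℝ)))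
  have hW : IsClosed (W : Set (Fin m → ℝ)) :=
    (((dualFG_homogenization A b).prod (PointedCone.dualFG_positive_pi _)).map L).isClosed
  have hsub : coneGen (((fun y => f y - c) '' {x | A *ᵥ x ≤ b}) + orthant m) ⊆ W := by
    rintro _ ⟨t, ht, _, ⟨_, ⟨y, hy, rfl⟩, k, hk, rfl⟩, rfl⟩
    have hty : A *ᵥ (t • y) ≤ t • b := by
      rw [mulVec_smul]
      exact smul_le_smul_of_nonneg_left hy ht
    refine ⟨((t • y, t), t • k), ⟨mem_homogenization.2 ⟨hty, ht⟩,
      (PointedCone.mem_positive ℝ _).2 (smul_nonneg ht hk)⟩, ?_⟩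
    show L _ = t • (f y - c + k)
    rw [congrFun f.decomp y]
    simp only [LinearMap.coprod_apply, map_smul, LinearMap.coe_smulRight, LinearMap.id_coe, id_eq,
      smul_sub, Pi.add_apply, smul_add, add_left_inj, L]
    abel
  refine (closure_minimal hsub hW).trans ?_
  rintro _ ⟨⟨⟨d, t⟩, k⟩, ⟨hdt, hk⟩, rfl⟩
  exact ⟨d, t, k, (mem_homogenization.1 hdt).1, (mem_homogenization.1 hdt).2, hk, rfl⟩

lemma linear_add_mem_closure_coneGen {x₀ d : κ → ℝ} {k : Fin m → ℝ} (hx₀ : A *ᵥ x₀ ≤ b)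
    (hd : A *ᵥ d ≤ 0) (hk : 0 ≤ k) (c : Fin m → ℝ) :
    f.linear d + k ∈ closure (coneGen (((fun y => f y - c) '' {x | A *ᵥ x ≤ b}) + orthant m)) := by
  refine mem_closure_coneGen_of_forall_add_smul_mem (s := f x₀ - c + 0) fun t ht => ?_
  have hmem : A *ᵥ (x₀ + t • d) ≤ b := by
    rw [mulVec_add, mulVec_smul]
    exact (add_le_add hx₀ (smul_nonpos_of_nonneg_of_nonpos ht hd)).trans_eq (add_zero b)
  have : f x₀ - c + 0 + t • (f.linear d + k) = f (x₀ + t • d) - c + t • k := by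
    rw [congrFun f.decomp (x₀ + t • d), congrFun f.decomp x₀]
    simp only [Pi.add_apply, add_zero, smul_add, map_add, map_smul]
    abel
  rw [this]
  exact add_mem_add (mem_image_of_mem _ hmem) (mem_orthant.2 (smul_nonneg ht hk))

theorem IsBensonProper.of_isNondominated [Fintype ι] (hne : {x | A *ᵥ x ≤ b}.Nonempty)
    {c₀ c : Fin m → ℝ}
    (h₀ : IsBensonProper f {x | A *ᵥ x ≤ b} c₀) (hc : IsNondominated f {x | A *ᵥ x ≤ b} c) :
    IsBensonProper f {x | A *ᵥ x ≤ b} c := by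
  obtain ⟨x₀, hx₀⟩ := hne
  refine subset_antisymm ?_ ?_
  · rintro w ⟨hw, hwneg⟩
    rw [mem_neg_orthant] at hwneg
    obtain ⟨d, t, k, hdt, ht, hk, rfl⟩ := closure_coneGen_subset A b f c hw
    rcases ht.eq_or_lt with rfl | ht
    · rw [zero_smul] at hdt
      rw [zero_smul, add_zero] at hwneg ⊢
      rw [← h₀]
      exact ⟨linear_add_mem_closure_coneGen A b f hx₀ hdt hk c₀, mem_neg_orthant.2 hwneg⟩
    · have hy : A *ᵥ (t⁻¹ • d) ≤ b :=
        calc A *ᵥ (t⁻¹ • d) = t⁻¹ • A *ᵥ d := mulVec_smul A t⁻¹ d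
          _ ≤ t⁻¹ • (t • b) := smul_le_smul_of_nonneg_left hdt (inv_nonneg.2 ht.le)
          _ = b := inv_smul_smul₀ ht.ne' b
      have hw : f.linear d + t • (f 0 - c) + k = t • (f (t⁻¹ • d) - c) + k := by
        rw [congrFun f.decomp (t⁻¹ • d), Pi.add_apply, f.linear.map_smul, add_sub_assoc, smul_add,
          smul_inv_smul₀ ht.ne']
      rw [hw] at hwneg ⊢
      have hdom : c - f (t⁻¹ • d) ∈ orthant m := by
        have : t • (f (t⁻¹ • d) - c) ≤ t • 0 :=
          (le_add_of_nonneg_right hk).trans (hwneg.trans_eq (smul_zero t).symm)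
        exact mem_orthant.2 (sub_nonneg.2 (sub_nonpos.1 ((smul_le_smul_iff_of_pos_left ht).1 this)))
      rw [hc _ hy hdom, sub_self, smul_zero, zero_add] at hwneg ⊢
      exact le_antisymm hwneg hk
  · rintro w rfl
    exact ⟨subset_closure (zero_mem_coneGen_s10 ⟨_, add_mem_add ⟨x₀, hx₀, rfl⟩ (mem_orthant.2 le_rfl)⟩),
      mem_neg_orthant.2 le_rfl⟩

end VectorOptimization

theorem stmt_10_general {n m : ℕ} (X : Set (Fin n → ℝ)) (hXne : X.Nonempty)
    (hXpoly : ∃ (p : ℕ) (a : Fin p → Fin n → ℝ) (b : Fin p → ℝ),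
      X = {x | ∀ i, ∑ j, a i j * x j ≤ b i})
    (f : (Fin n → ℝ) →ᵃ[ℝ] (Fin m → ℝ))
    (ε : Fin m → ℝ)
    (hex : ∃ xbar ∈ X,
      closure (coneGen (((fun x => f x - (f xbar - ε)) '' X) + orthant m))
        ∩ (-(orthant m)) = {0}) :
    {x | x ∈ X ∧
        closure (coneGen (((fun y => f y - (f x - ε)) '' X) + orthant m))
          ∩ (-(orthant m)) = {0}} =
      {x | x ∈ X ∧ ¬ ∃ y ∈ X, f x - ε - f y ∈ orthant m ∧ f y ≠ f x - ε} := by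
  obtain ⟨p, a, b, rfl⟩ := hXpoly
  obtain ⟨xbar, -, hbar⟩ := hex
  refine Set.sep_ext_iff.2 fun x _ => ⟨fun h => ?_, fun h => ?_⟩
  · rintro ⟨y, hy, hdom, hne⟩
    exact hne (IsBensonProper.isNondominated h y hy hdom)
  · push Not at h
    exact IsBensonProper.of_isNondominated a b f hXne hbar h

/-- In a linear vector optimization problem with ordering cone `ℝ^m_+` and
`ε ∈ ℝ^m_+ \ {0}`: if there exists at least one ε-properly efficient solution (in the
Benson sense), then the ε-properly efficient solution set coincides with the ε-efficient
solution set. -/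
theorem stmt_10 {n m : ℕ} (X : Set (Fin n → ℝ)) (hXne : X.Nonempty)
    (hXpoly : ∃ (p : ℕ) (a : Fin p → Fin n → ℝ) (b : Fin p → ℝ),
      X = {x | ∀ i, ∑ j, a i j * x j ≤ b i})
    (f : (Fin n → ℝ) →ᵃ[ℝ] (Fin m → ℝ))
    (ε : Fin m → ℝ) (hε : ∀ i, 0 ≤ ε i) (hε0 : ε ≠ 0)
    (hex : ∃ xbar ∈ X,
      closure (coneGen (((fun x => f x - (f xbar - ε)) '' X) + orthant m))
        ∩ (-(orthant m)) = {0}) :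
    {x | x ∈ X ∧
        closure (coneGen (((fun y => f y - (f x - ε)) '' X) + orthant m))
          ∩ (-(orthant m)) = {0}} =
      {x | x ∈ X ∧ ¬ ∃ y ∈ X, f x - ε - f y ∈ orthant m ∧ f y ≠ f x - ε} :=
  stmt_10_general X hXne hXpoly f ε hex
end
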